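/- Let d ≥ 1 and σ > 0. For x ∈ ℝ^d and y ∈ {−1, 1} define G(x,y) ∈ ℝ^{d + d(d+1)/2} with blocks y·x and t₂(x) (the case σ₁ = σ₂ = σ of the logistic-regression statistic map, where the scaling cancels), with the squared Euclidean distance of the t₂ blocks counting Σ_j (x_j² − x'_j²)² once and each (x_j x_k − x'_j x'_k)² with j < k twice. Then for all x, x' ∈ ℝ^d with ‖x‖₂ ≤ 1 and ‖x'‖₂ ≤ 1 and all y, y' ∈ {−1, 1}, one has ‖G(x,y) − G(x',y')‖₂ ≤ √(4.5). -/
import Mathlib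


open scoped RealInnerProductSpace

lemma double_sum_split (d : ℕ) (f : Fin d → Fin d → ℝ)
    (hsymm : ∀ j k, f j k = f k j) :
    ∑ j, ∑ k, f j k = ∑ j, f j j + 2 * ∑ j, ∑ k ∈ Finset.Ioi j, f j k := by
  have key : ∀ j : Fin d, ∑ k, f j k
      = f j j + ∑ k ∈ Finset.Ioi j, f j k + ∑ k ∈ Finset.Iio j, f j k := by
    intro j
    have : (Finset.univ : Finset (Fin d))
        = insert j (Finset.Ioi j ∪ Finset.Iio j) := by
      ext k
      simp [Finset.mem_Ioi, Finset.mem_Iio, or_comm, lt_or_gt_of_ne, eq_comm]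
      rcases lt_trichotomy j k with h | h | h <;> tauto
    rw [this, Finset.sum_insert, Finset.sum_union]
    · ring
    · rw [Finset.disjoint_left]; intro a ha hb
      simp only [Finset.mem_Ioi] at ha
      simp only [Finset.mem_Iio] at hb
      exact absurd (ha.trans hb) (lt_irrefl j)
    · simp
  have swap : ∑ j, ∑ k ∈ Finset.Iio j, f j k = ∑ j, ∑ k ∈ Finset.Ioi j, f j k := by
    rw [Finset.sum_sigma', Finset.sum_sigma']
    refine Finset.sum_nbij' (fun p => ⟨p.2, p.1⟩) (fun p => ⟨p.2, p.1⟩) ?_ ?_ ?_ ?_ ?_ <;>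
      simp [hsymm]
  simp_rw [key]
  rw [Finset.sum_add_distrib, Finset.sum_add_distrib, swap]
  ring

/-- Corollary for logistic regression: the special case R = 1, σ₁ = σ₂ of the
sensitivity bound for the approximate sufficient statistics of logistic
regression, with blocks y·x and t₂(x). -/
theorem logistic_regression_sensitivity_special_case
    (d : ℕ) (hd : 1 ≤ d) (σ : ℝ) (hσ : 0 < σ)
    (x x' : EuclideanSpace ℝ (Fin d)) (y y' : ℝ)
    (hy : y = -1 ∨ y = 1) (hy' : y' = -1 ∨ y' = 1)
    (hx : ‖x‖ ≤ 1) (hx' : ‖x'‖ ≤ 1) :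
    Real.sqrt ((∑ j, (y * x j - y' * x' j) ^ 2)
      + (∑ j, (x j ^ 2 - x' j ^ 2) ^ 2
          + 2 * ∑ j, ∑ k ∈ Finset.Ioi j, (x j * x k - x' j * x' k) ^ 2))
      ≤ Real.sqrt 4.5 := by
  set A := ∑ j, x j ^ 2 with hA
  set B := ∑ j, x' j ^ 2 with hB
  set C := ∑ j, x j * x' j with hC
  have hAnn : 0 ≤ A := Finset.sum_nonneg fun i _ => sq_nonneg _
  have hBnn : 0 ≤ B := Finset.sum_nonneg fun i _ => sq_nonneg _
  have hA1 : A ≤ 1 := by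
    have hn : ‖x‖ ^ 2 = A := by
      rw [EuclideanSpace.norm_eq, Real.sq_sqrt (Finset.sum_nonneg fun i _ => sq_nonneg _)]
      simp [Real.norm_eq_abs, sq_abs, hA]
    nlinarith [norm_nonneg x]
  have hB1 : B ≤ 1 := by
    have hn : ‖x'‖ ^ 2 = B := by
      rw [EuclideanSpace.norm_eq, Real.sq_sqrt (Finset.sum_nonneg fun i _ => sq_nonneg _)]
      simp [Real.norm_eq_abs, sq_abs, hB]
    nlinarith [norm_nonneg x']
  have hy2 : y ^ 2 = 1 := by rcases hy with h | h <;> simp [h]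
  have hy'2 : y' ^ 2 = 1 := by rcases hy' with h | h <;> simp [h]
  -- first sum
  have e1 : (∑ j, (y * x j - y' * x' j) ^ 2) = A + B - 2 * (y * y') * C := by
    rw [hA, hB, hC, Finset.mul_sum, ← Finset.sum_add_distrib, ← Finset.sum_sub_distrib]
    apply Finset.sum_congr rfl
    intro j _
    nlinarith [hy2, hy'2]
  -- second sum via full double sum
  have e2 : (∑ j, (x j ^ 2 - x' j ^ 2) ^ 2
      + 2 * ∑ j, ∑ k ∈ Finset.Ioi j, (x j * x k - x' j * x' k) ^ 2)
      = A ^ 2 + B ^ 2 - 2 * C ^ 2 := by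
    have hsplit := double_sum_split d (fun j k => (x j * x k - x' j * x' k) ^ 2)
      (fun j k => by ring)
    have hdiag : ∀ j : Fin d, (x j * x j - x' j * x' j) ^ 2
        = (x j ^ 2 - x' j ^ 2) ^ 2 := fun j => by ring
    have hfull : ∑ j, ∑ k, (x j * x k - x' j * x' k) ^ 2
        = A ^ 2 + B ^ 2 - 2 * C ^ 2 := by
      have : ∀ j : Fin d, ∑ k, (x j * x k - x' j * x' k) ^ 2
          = x j ^ 2 * A + x' j ^ 2 * B - 2 * (x j * x' j) * C := by
        intro j
        rw [hA, hB, hC, Finset.mul_sum, Finset.mul_sum, Finset.mul_sum,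
          ← Finset.sum_add_distrib, ← Finset.sum_sub_distrib]
        exact Finset.sum_congr rfl fun k _ => by ring
      simp_rw [this]
      rw [Finset.sum_sub_distrib, Finset.sum_add_distrib, ← Finset.sum_mul,
        ← Finset.sum_mul, ← hA, ← hB]
      have : ∑ j, 2 * (x j * x' j) * C = 2 * C * C := by
        rw [← Finset.sum_mul, ← Finset.mul_sum, ← hC]
      rw [this]; ring
    simp_rw [hdiag] at hsplit
    linarith [hsplit, hfull]
  rw [e1, e2]
  apply Real.sqrt_le_sqrt
  have hs : y * y' = 1 ∨ y * y' = -1 := by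
    rcases hy with h | h <;> rcases hy' with h' | h' <;> simp [h, h']
  rcases hs with h | h <;> rw [h] <;> nlinarith [sq_nonneg (2 * C - 1), sq_nonneg (2 * C + 1)]
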